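/- Evaluation yields a cubespace morphism: let g : Z → Y be an s-fibration, z ∈ Z, and c ∈ C^n(g⁻¹(g(z))). Then for any (φ_ω)_{ω ∈ {0,1}^n} in the Host–Kra cube group HK^n(Aut_•(g)) of the filtered group Aut_•(g), the configuration ω ↦ φ_ω(c(ω)) is an n-cube of g⁻¹(g(z)). In particular, the map Aut₁(g) → g⁻¹(g(z)), φ ↦ φ(z), sends Host–Kra cubes of Aut_•(g) to cubes of the fiber. -/
import Mathlib


open Function Set

/-- The all-ones vertex `1⃗` of the discrete cube `{0,1}^k`. -/
def topVtx (k : ℕ) : Fin k → Bool := fun _ => true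

/-- A family of cube sets on a space `X`: for each `k`, a set of `k`-configurations. -/
structure CubeFamily (X : Type*) where
  cubes : ∀ k : ℕ, Set ((Fin k → Bool) → X)

/-- A morphism of discrete cubes: each coordinate function is constantly `0`,
constantly `1`, a coordinate `ω i`, or a negated coordinate `!ω i`. -/
def IsDiscreteCubeMorphism {k l : ℕ} (ρ : (Fin k → Bool) → (Fin l → Bool)) : Prop :=
  ∀ j : Fin l, (∀ ω, ρ ω j = false) ∨ (∀ ω, ρ ω j = true) ∨
    (∃ i : Fin k, ∀ ω, ρ ω j = ω i) ∨ (∃ i : Fin k, ∀ ω, ρ ω j = !(ω i))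

/-- The cubespace axioms: cube sets are closed, `C^0(X) = X`, and cubes are stable
under precomposition with morphisms of discrete cubes. -/
def CubeFamily.IsCubespace {X : Type*} [TopologicalSpace X] (S : CubeFamily X) : Prop :=
  (∀ k, IsClosed (S.cubes k)) ∧ S.cubes 0 = Set.univ ∧
    ∀ {k l : ℕ} (ρ : (Fin k → Bool) → (Fin l → Bool)), IsDiscreteCubeMorphism ρ →
      ∀ c ∈ S.cubes l, (fun ω => c (ρ ω)) ∈ S.cubes k

/-- A cubespace morphism: a continuous map sending cubes to cubes. -/
def IsMorphism {X Y : Type*} [TopologicalSpace X] [TopologicalSpace Y]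
    (S : CubeFamily X) (T : CubeFamily Y) (f : X → Y) : Prop :=
  Continuous f ∧ ∀ k, ∀ c ∈ S.cubes k, (fun ω => f (c ω)) ∈ T.cubes k

/-- `lam` is a `k`-corner: each lower face `{ω : ω i = 0}` restricts to a `(k-1)`-cube.
(The restriction of `lam` to the face `{ω : ω i = 0}` is a `(k-1)`-cube iff the
degenerate configuration `ω ↦ lam (update ω i false)` is a `k`-cube, by the
discrete-cube-morphism axiom; the value of `lam` at `topVtx k` is irrelevant here.) -/
def IsCubeCorner {X : Type*} (S : CubeFamily X) {k : ℕ} (lam : (Fin k → Bool) → X) : Prop :=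
  ∀ i : Fin k, (fun ω => lam (Function.update ω i false)) ∈ S.cubes k

/-- Relative `k`-completion for `f : X → Y`: every `k`-corner in `X` whose `f`-image
extends to a `k`-cube `c` of `Y` can be completed to a `k`-cube of `X` lying over `c`. -/
def HasCompletionAt {X Y : Type*} (S : CubeFamily X) (T : CubeFamily Y) (f : X → Y)
    (k : ℕ) : Prop :=
  ∀ (lam : (Fin k → Bool) → X) (c : (Fin k → Bool) → Y), IsCubeCorner S lam → c ∈ T.cubes k →
    (∀ ω, ω ≠ topVtx k → f (lam ω) = c ω) →
    ∃ c₀ ∈ S.cubes k, (∀ ω, ω ≠ topVtx k → c₀ ω = lam ω) ∧ (fun ω => f (c₀ ω)) = c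

/-- A fibration: a cubespace morphism with `k`-completion for all `k ≥ 0`. -/
def IsFibration {X Y : Type*} [TopologicalSpace X] [TopologicalSpace Y]
    (S : CubeFamily X) (T : CubeFamily Y) (f : X → Y) : Prop :=
  IsMorphism S T f ∧ ∀ k, HasCompletionAt S T f k

/-- Relative `k`-uniqueness: two `k`-cubes agreeing off the top vertex with equal
`f`-images are equal. -/
def HasUniquenessAt {X Y : Type*} (S : CubeFamily X) (T : CubeFamily Y) (f : X → Y)
    (k : ℕ) : Prop :=
  ∀ c ∈ S.cubes k, ∀ c' ∈ S.cubes k, (∀ ω, ω ≠ topVtx k → c ω = c' ω) →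
    (fun ω => f (c ω)) = (fun ω => f (c' ω)) → c = c'

/-- An `s`-fibration: a fibration with `(s+1)`-uniqueness. -/
def IsSFibration {X Y : Type*} [TopologicalSpace X] [TopologicalSpace Y]
    (S : CubeFamily X) (T : CubeFamily Y) (f : X → Y) (s : ℕ) : Prop :=
  IsFibration S T f ∧ HasUniquenessAt S T f (s + 1)

/-- Absolute fibrancy: every `k`-corner completes to a `k`-cube. -/
def IsFibrant {X : Type*} (S : CubeFamily X) : Prop :=
  ∀ (k : ℕ) (lam : (Fin k → Bool) → X), IsCubeCorner S lam →
    ∃ c₀ ∈ S.cubes k, ∀ ω, ω ≠ topVtx k → c₀ ω = lam ω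

/-- Absolute `k`-uniqueness. -/
def HasUnique {X : Type*} (S : CubeFamily X) (k : ℕ) : Prop :=
  ∀ c ∈ S.cubes k, ∀ c' ∈ S.cubes k, (∀ ω, ω ≠ topVtx k → c ω = c' ω) → c = c'

/-- Ergodicity: every pair of points is a `1`-cube. -/
def IsErgodic {X : Type*} (S : CubeFamily X) : Prop := S.cubes 1 = Set.univ

/-- Concatenation `[c₁, c₂]` of two `k`-configurations along the last coordinate. -/
def concatCube {X : Type*} {k : ℕ} (c₁ c₂ : (Fin k → Bool) → X) :
    (Fin (k + 1) → Bool) → X :=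
  fun ω => if ω (Fin.last k) = true then c₂ (fun i => ω i.castSucc)
           else c₁ (fun i => ω i.castSucc)

/-- The gluing property. -/
def IsGluing {X : Type*} (S : CubeFamily X) : Prop :=
  ∀ (k : ℕ) (c₁ c₂ c₃ : (Fin k → Bool) → X), c₁ ∈ S.cubes k → c₂ ∈ S.cubes k →
    c₃ ∈ S.cubes k → concatCube c₁ c₂ ∈ S.cubes (k + 1) →
    concatCube c₂ c₃ ∈ S.cubes (k + 1) → concatCube c₁ c₃ ∈ S.cubes (k + 1)

/-- The `s`-th canonical relation `x ∼ₛ x'`. -/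
def CanonRel {X : Type*} (S : CubeFamily X) (s : ℕ) (x x' : X) : Prop :=
  ∃ c ∈ S.cubes (s + 1), ∃ c' ∈ S.cubes (s + 1),
    (∀ ω, ω ≠ topVtx (s + 1) → c ω = c' ω) ∧ c (topVtx (s + 1)) = x ∧ c' (topVtx (s + 1)) = x'

/-- The `s`-th canonical relation relative to `f` : `x ∼_{f,s} x'`. -/
def RelCanonRel {X Y : Type*} (S : CubeFamily X) (f : X → Y) (s : ℕ) (x x' : X) : Prop :=
  CanonRel S s x x' ∧ f x = f x'

/-- `F ⊆ {0,1}^n` is a face of codimension `k`: obtained by fixing the values of `k`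
coordinates. -/
def IsFaceOfCodim {n : ℕ} (F : Set (Fin n → Bool)) (k : ℕ) : Prop :=
  ∃ (I : Finset (Fin n)) (b : Fin n → Bool), I.card = k ∧ F = {ω | ∀ i ∈ I, ω i = b i}

open Classical in
/-- Modify the configuration `c` by applying `φ` on the face `F`. -/
noncomputable def faceModify {X : Type*} {n : ℕ} (F : Set (Fin n → Bool)) (φ : X → X)
    (c : (Fin n → Bool) → X) : (Fin n → Bool) → X :=
  fun ω => if ω ∈ F then φ (c ω) else c ω

/-- `φ` is a `k`-translation of the cubespace `S`: a cubespace automorphism such that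
modifying any `n`-cube (`n ≥ k`) by `φ` along any codimension-`k` face yields a cube. -/
def IsTranslationOf {X : Type*} (S : CubeFamily X) (φ : X → X) (k : ℕ) : Prop :=
  (∀ (n : ℕ) (c : (Fin n → Bool) → X), c ∈ S.cubes n ↔ (fun ω => φ (c ω)) ∈ S.cubes n) ∧
  ∀ (n : ℕ), k ≤ n → ∀ F : Set (Fin n → Bool), IsFaceOfCodim F k →
    ∀ c ∈ S.cubes n, faceModify F φ c ∈ S.cubes n

/-- The subcubespace on a subset `A ⊆ X`: cubes of `X` taking values in `A`. -/
def subFamily {X : Type*} (S : CubeFamily X) (A : Set X) : CubeFamily X :=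
  ⟨fun k => {c | c ∈ S.cubes k ∧ ∀ ω, c ω ∈ A}⟩

/-- `u` belongs to the `k`-th translation group `Aut_k(g)` of a map `g : X → Z`: it is
a homeomorphism of `X` fixing the fibers of `g` and restricting to a `k`-translation of
each subcubespace `g⁻¹(z)`. -/
def MemAut {X Z : Type*} [TopologicalSpace X] (S : CubeFamily X) (g : X → Z)
    (u : X → X) (k : ℕ) : Prop :=
  IsHomeomorph u ∧ (∀ x, g (u x) = g x) ∧
    ∀ z : Z, IsTranslationOf (subFamily S (g ⁻¹' {z})) u k

open Classical in
/-- Generators of the Host–Kra cube group of the filtered group `Aut_•(g)`: the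
configurations `[u]_F` equal to `u` on a face `F ⊆ {0,1}^n` and the identity elsewhere,
where `u ∈ Aut_{n − dim F}(g)` (with `Aut_0 = Aut_1`). -/
noncomputable def hkAutGens {X Z : Type*} [TopologicalSpace X] (S : CubeFamily X)
    (g : X → Z) (n : ℕ) : Set ((Fin n → Bool) → Equiv.Perm X) :=
  {γ | ∃ (F : Set (Fin n → Bool)) (d : ℕ) (u : Equiv.Perm X), IsFaceOfCodim F d ∧
      MemAut S g (⇑u) (max d 1) ∧ γ = fun ω => if ω ∈ F then u else 1}

/-- The Host–Kra cube group `HK^n(Aut_•(g))`. -/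
noncomputable def hkAut {X Z : Type*} [TopologicalSpace X] (S : CubeFamily X)
    (g : X → Z) (n : ℕ) : Subgroup ((Fin n → Bool) → Equiv.Perm X) :=
  Subgroup.closure (hkAutGens S g n)

section Aux

-- Forward: a `d`-translation modifies a codim-`d` face of a cube into a cube.
open Classical in
lemma faceModify_mem {X : Type*} (W : CubeFamily X) (u : Equiv.Perm X)
    {d : ℕ} (hd : 1 ≤ d) (hu : IsTranslationOf W (⇑u) d)
    {n : ℕ} {F : Set (Fin n → Bool)} (hF : IsFaceOfCodim F d)
    {c : (Fin n → Bool) → X} (hc : c ∈ W.cubes n) :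
    (fun ω => if ω ∈ F then u (c ω) else c ω) ∈ W.cubes n := by
  obtain ⟨I, b, hcard, rfl⟩ := hF
  have hdn : d ≤ n := by
    have := Finset.card_le_univ I
    simp only [Finset.card_univ, Fintype.card_fin] at this
    omega
  have h := hu.2 n hdn {ω | ∀ i ∈ I, ω i = b i} ⟨I, b, hcard, rfl⟩ c hc
  exact h

-- Inverse: apply `u` on all parallel faces distinct from `F`, then `u⁻¹` globally.
open Classical in
lemma faceModify_inv_mem {X : Type*} (W : CubeFamily X) (u : Equiv.Perm X)
    {d : ℕ} (hd : 1 ≤ d) (hu : IsTranslationOf W (⇑u) d)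
    {n : ℕ} {F : Set (Fin n → Bool)} (hF : IsFaceOfCodim F d)
    {c : (Fin n → Bool) → X} (hc : c ∈ W.cubes n) :
    (fun ω => if ω ∈ F then u⁻¹ (c ω) else c ω) ∈ W.cubes n := by
  classical
  obtain ⟨I, b, hcard, rfl⟩ := hF
  have hdn : d ≤ n := by
    have := Finset.card_le_univ I
    simp only [Finset.card_univ, Fintype.card_fin] at this
    omega
  set res : (Fin n → Bool) → (Fin n → Bool) := fun ω i => if i ∈ I then ω i else false
    with hres
  have hresI : ∀ (p ω : Fin n → Bool), (∀ i, i ∉ I → p i = false) →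
      (res ω = p ↔ ∀ i ∈ I, ω i = p i) := by
    intro p ω hp
    constructor
    · intro h i hi
      rw [← h]; simp [res, hi]
    · intro h
      funext i
      by_cases hi : i ∈ I
      · simp [res, hi, h i hi]
      · simp [res, hi, hp i hi]
  have key : ∀ Q : Finset (Fin n → Bool), (∀ p ∈ Q, ∀ i, i ∉ I → p i = false) →
      (fun ω => if res ω ∈ Q then u (c ω) else c ω) ∈ W.cubes n := by
    intro Q
    induction Q using Finset.induction_on with
    | empty => intro _; simpa using hc
    | @insert p Q hp ih =>
        intro hQ
        have hp0 : ∀ i, i ∉ I → p i = false := hQ p (Finset.mem_insert_self p Q)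
        have hQ' : ∀ q ∈ Q, ∀ i, i ∉ I → q i = false :=
          fun q hq => hQ q (Finset.mem_insert_of_mem hq)
        have hprev := ih hQ'
        have hnew := hu.2 n hdn {ω | ∀ i ∈ I, ω i = p i} ⟨I, p, hcard, rfl⟩ _ hprev
        convert hnew using 1
        funext ω
        simp only [faceModify, Set.mem_setOf_eq]
        by_cases hω : ∀ i ∈ I, ω i = p i
        · have hre : res ω = p := (hresI p ω hp0).mpr hω
          have h1 : res ω ∈ insert p Q := by rw [hre]; exact Finset.mem_insert_self p Q
          have h2 : res ω ∉ Q := by rw [hre]; exact hp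
          rw [if_pos h1, if_pos hω, if_neg h2]
        · have hre : res ω ≠ p := fun h => hω ((hresI p ω hp0).mp h)
          rw [if_neg hω]
          by_cases h2 : res ω ∈ Q
          · rw [if_pos h2, if_pos (Finset.mem_insert_of_mem h2)]
          · rw [if_neg h2, if_neg (fun h => (Finset.mem_insert.mp h).elim hre h2)]
  have hrb0 : ∀ i, i ∉ I → (res b) i = false := fun i hi => by simp [res, hi]
  set S0 : Finset (Fin n → Bool) :=
    Finset.univ.filter (fun p => ∀ i, i ∉ I → p i = false) with hS0
  have he := key (S0.erase (res b)) (by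
    intro p hp
    exact (Finset.mem_filter.mp (Finset.mem_erase.mp hp).2).2)
  have hiff : ∀ ω : Fin n → Bool,
      (res ω ∈ S0.erase (res b)) ↔ ¬ (∀ i ∈ I, ω i = b i) := by
    intro ω
    have hmem : res ω ∈ S0 := by
      rw [hS0, Finset.mem_filter]
      refine ⟨Finset.mem_univ _, fun i hi => by simp [res, hi]⟩
    rw [Finset.mem_erase]
    constructor
    · rintro ⟨hne, -⟩ hall
      exact hne ((hresI (res b) ω hrb0).mpr (fun i hi => by simp [res, hi, hall i hi]))
    · intro hall
      refine ⟨fun h => hall (fun i hi => ?_), hmem⟩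
      have := (hresI (res b) ω hrb0).mp h i hi
      simpa [res, hi] using this
  have hfin : (fun ω => u⁻¹ ((fun ω => if res ω ∈ S0.erase (res b) then u (c ω) else c ω) ω))
      ∈ W.cubes n := by
    rw [hu.1 n]
    have : (fun ω => u (u⁻¹ (if res ω ∈ S0.erase (res b) then u (c ω) else c ω)))
        = fun ω => if res ω ∈ S0.erase (res b) then u (c ω) else c ω := by
      funext ω; simp
    simpa [this] using he
  convert hfin using 1
  funext ω
  simp only [Set.mem_setOf_eq]
  by_cases hω : ∀ i ∈ I, ω i = b i
  · have h1 : res ω ∉ S0.erase (res b) := fun h => ((hiff ω).mp h) hω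
    rw [if_pos hω, if_neg h1]
  · have h1 : res ω ∈ S0.erase (res b) := (hiff ω).mpr hω
    rw [if_neg hω, if_pos h1]
    simp

end Aux

/-- evaluation yields a cubespace morphism: let `g : X → Y` be an
`s`-fibration between compact ergodic gluing cubespaces, `z ∈ X`, and `c` an `n`-cube of
the fiber `g⁻¹(g z)`.  Then for any `(φ_ω)_ω ∈ HK^n(Aut_•(g))` the configuration
`ω ↦ φ_ω(c(ω))` is again an `n`-cube of `g⁻¹(g z)`; in particular evaluation at `z`,
`φ ↦ φ(z)`, sends Host–Kra cubes of `Aut_•(g)` to cubes of the fiber. -/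


theorem evaluation_is_morphism {X Y : Type*}
    [MetricSpace X] [CompactSpace X] [MetricSpace Y] [CompactSpace Y]
    (S : CubeFamily X) (T : CubeFamily Y) (hS : S.IsCubespace) (hT : T.IsCubespace)
    (heS : IsErgodic S) (heT : IsErgodic T) (hgS : IsGluing S) (hgT : IsGluing T)
    (g : X → Y) (s : ℕ) (hg : IsSFibration S T g s)
    (z : X) (n : ℕ) (c : (Fin n → Bool) → X)
    (hc : c ∈ S.cubes n) (hcz : ∀ ω, g (c ω) = g z) :
    (∀ γ ∈ hkAut S g n,
      (fun ω => γ ω (c ω)) ∈ S.cubes n ∧ ∀ ω, g (γ ω (c ω)) = g z) ∧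
    (∀ γ ∈ hkAut S g n,
      (fun ω => γ ω z) ∈ S.cubes n ∧ ∀ ω, g (γ ω z) = g z) := by
  classical
  set W : CubeFamily X := subFamily S (g ⁻¹' {g z}) with hW
  -- the key closure induction: every Host–Kra element and its inverse act on fiber cubes
  have key : ∀ γ ∈ hkAut S g n, ∀ e ∈ W.cubes n,
      (fun ω => γ ω (e ω)) ∈ W.cubes n ∧ (fun ω => (γ ω)⁻¹ (e ω)) ∈ W.cubes n := by
    intro γ hγ
    induction hγ using Subgroup.closure_induction with
    | mem γ hγ =>
        obtain ⟨F, d, u, hF, hu, rfl⟩ := hγ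
        have htr : IsTranslationOf W (⇑u) (max d 1) := hu.2.2 (g z)
        intro e he
        rcases Nat.eq_zero_or_pos d with hd0 | hd1
        · -- codimension 0 : the face is the whole cube
          subst hd0
          obtain ⟨I, b, hcard, rfl⟩ := hF
          have hI : I = ∅ := Finset.card_eq_zero.mp hcard
          subst hI
          have hFu : ∀ ω : Fin n → Bool, ω ∈ {ω : Fin n → Bool | ∀ i ∈ (∅ : Finset (Fin n)), ω i = b i} := by
            intro ω; simp
          constructor
          · have := (htr.1 n e).mp he
            convert this using 1
            funext ω; simp [hFu ω]
          · have h1 : (fun ω => u (u⁻¹ (e ω))) = e := by funext ω; simp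
            have := (htr.1 n (fun ω => u⁻¹ (e ω))).mpr (by rw [h1]; exact he)
            convert this using 1
            funext ω; simp [hFu ω]
        · have hmax : max d 1 = d := max_eq_left hd1
          rw [hmax] at htr
          constructor
          · have := faceModify_mem W u hd1 htr hF he
            convert this using 1
            funext ω; by_cases hω : ω ∈ F <;> simp [hω]
          · have := faceModify_inv_mem W u hd1 htr hF he
            convert this using 1
            funext ω; by_cases hω : ω ∈ F <;> simp [hω]
    | one =>
        intro e he
        constructor <;> · simpa using he
    | mul a b _ _ ha hb =>
        intro e he
        constructor
        · have h1 := (hb e he).1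
          have h2 := (ha _ h1).1
          simpa [Pi.mul_apply, Equiv.Perm.mul_apply] using h2
        · have h1 := (ha e he).2
          have h2 := (hb _ h1).2
          simpa [Pi.mul_apply, Equiv.Perm.mul_apply] using h2
    | inv a _ ha =>
        intro e he
        constructor
        · have := (ha e he).2
          simpa [Pi.inv_apply] using this
        · have := (ha e he).1
          simpa [Pi.inv_apply] using this
  have hcW : c ∈ W.cubes n := ⟨hc, fun ω => by simpa using hcz ω⟩
  have hzW : (fun _ : Fin n → Bool => z) ∈ W.cubes n := by
    refine ⟨?_, fun ω => by simp⟩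
    have h0 : (fun _ : Fin 0 → Bool => z) ∈ S.cubes 0 := by
      rw [hS.2.1]; exact Set.mem_univ _
    have hρ : IsDiscreteCubeMorphism
        (fun (_ : Fin n → Bool) => (fun j : Fin 0 => j.elim0)) := fun j => j.elim0
    exact hS.2.2 _ hρ _ h0
  constructor
  · intro γ hγ
    obtain ⟨h1, h2⟩ := (key γ hγ c hcW).1
    exact ⟨h1, fun ω => h2 ω⟩
  · intro γ hγ
    obtain ⟨h1, h2⟩ := (key γ hγ _ hzW).1
    exact ⟨h1, fun ω => h2 ω⟩
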